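/- Let K be a real number with K ≠ 0 and K ≠ −2, let I ⊆ ℝ be an open interval, and let u : I → ℝ be differentiable with u(λ) ≠ −1 for all λ ∈ I, satisfying the Lambert-type relation u(λ)·exp(u(λ)) = −((2 + K)/K)·exp(−1 − 2/K + 8λ) for all λ ∈ I. Define a(λ) := −(K/2)(1 + u(λ)). Then a(λ) ≠ 0 and a′(λ) = −4K − 2K²/a(λ) for every λ ∈ I. -/
import Mathlib


/-- The FRW scale factor `a(λ) = −(K/2)(1 + W₋₁(−((2+K)/K)e^{−1−2/K+8λ}))`, defined
through a branch `u` of the Lambert W relation `u·e^u = −((2+K)/K)e^{−1−2/K+8λ}`,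
solves the RG-2 flow ODE `a′ = −4K − 2K²/a` (equation (2.16) of the paper). -/
theorem rg2_frw_lambert_solution
    (K : ℝ) (hK0 : K ≠ 0) (hK2 : K ≠ -2) (c d : ℝ) (u : ℝ → ℝ)
    (hdiff : ∀ x ∈ Set.Ioo c d, DifferentiableAt ℝ u x)
    (hne : ∀ x ∈ Set.Ioo c d, u x ≠ -1)
    (hrel : ∀ x ∈ Set.Ioo c d,
      u x * Real.exp (u x) = -((2 + K) / K) * Real.exp (-1 - 2 / K + 8 * x)) :
    ∀ x ∈ Set.Ioo c d,
      -(K / 2) * (1 + u x) ≠ 0 ∧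
      deriv (fun y => -(K / 2) * (1 + u y)) x
        = -4 * K - 2 * K ^ 2 / (-(K / 2) * (1 + u x)) := by
  intro x hx
  have hmem : Set.Ioo c d ∈ nhds x := isOpen_Ioo.mem_nhds hx
  have hu := hdiff x hx
  have hne' := hne x hx
  have h1u : (1 : ℝ) + u x ≠ 0 := by
    intro h; apply hne'; linarith
  have ha : -(K / 2) * (1 + u x) ≠ 0 :=
    mul_ne_zero (by simpa using hK0) h1u
  refine ⟨ha, ?_⟩
  have hu' := hu.hasDerivAt
  have he : HasDerivAt (fun y => Real.exp (u y)) (Real.exp (u x) * deriv u x) x :=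
    (Real.hasDerivAt_exp (u x)).comp x hu'
  have hf : HasDerivAt (fun y => u y * Real.exp (u y))
      (deriv u x * Real.exp (u x) + u x * (Real.exp (u x) * deriv u x)) x :=
    hu'.mul he
  have hlin : HasDerivAt (fun y : ℝ => -1 - 2 / K + 8 * y) 8 x := by
    simpa using ((hasDerivAt_id x).const_mul (8:ℝ)).const_add (-1 - 2 / K)
  have hg : HasDerivAt (fun y : ℝ => -((2 + K) / K) * Real.exp (-1 - 2 / K + 8 * y))
      (-((2 + K) / K) * (Real.exp (-1 - 2 / K + 8 * x) * 8)) x :=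
    ((Real.hasDerivAt_exp _).comp x hlin).const_mul _
  have heq : (fun y => u y * Real.exp (u y)) =ᶠ[nhds x]
      (fun y => -((2 + K) / K) * Real.exp (-1 - 2 / K + 8 * y)) :=
    Filter.eventuallyEq_of_mem hmem hrel
  have hderiv_eq : deriv u x * Real.exp (u x) + u x * (Real.exp (u x) * deriv u x)
      = -((2 + K) / K) * (Real.exp (-1 - 2 / K + 8 * x) * 8) := by
    have := hf.deriv ▸ hg.deriv ▸ Filter.EventuallyEq.deriv_eq heq
    rw [← hf.deriv, ← hg.deriv]
    exact Filter.EventuallyEq.deriv_eq heq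
  have hrelx := hrel x hx
  have hexp : Real.exp (u x) ≠ 0 := Real.exp_ne_zero _
  have hkey : deriv u x * Real.exp (u x) + u x * (Real.exp (u x) * deriv u x)
      = 8 * (u x * Real.exp (u x)) := by
    rw [hderiv_eq, hrelx]; ring
  have hu_deriv : deriv u x = 8 * u x / (1 + u x) := by
    field_simp
    have h2 : (deriv u x * (1 + u x) - 8 * u x) * Real.exp (u x) = 0 := by
      ring_nf
      ring_nf at hkey
      linarith
    have h3 := (mul_eq_zero.mp h2).resolve_right hexp
    linarith
  have hA : HasDerivAt (fun y => -(K / 2) * (1 + u y)) (-(K / 2) * deriv u x) x :=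
    by simpa using ((hasDerivAt_const x (1:ℝ)).add hu').const_mul (-(K/2))
  rw [hA.deriv, hu_deriv]
  field_simp
  ring
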